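/- Let X ∈ ℝ^{n×D} and η ∈ ℝ^n, and suppose X = ZA^⊤ for some Z ∈ ℝ^{n×d} and A ∈ ℝ^{D×d} with A^⊤A = I_d. Then for any λ > 0, η^⊤ X (X^⊤X + λI_D)^{-1} X^⊤ η = η^⊤ Z (Z^⊤Z + λI_d)^{-1} Z^⊤ η. -/
import Mathlib


open Matrix

/-- If X = ZAᵀ with A having orthonormal columns, then for λ > 0,
ηᵀX(XᵀX + λI_D)⁻¹Xᵀη = ηᵀZ(ZᵀZ + λI_d)⁻¹Zᵀη. -/
theorem weighted_norm_subspace {n D d : ℕ}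
    (X : Matrix (Fin n) (Fin D) ℝ) (Z : Matrix (Fin n) (Fin d) ℝ)
    (A : Matrix (Fin D) (Fin d) ℝ) (eta : Fin n → ℝ)
    (hA : Aᵀ * A = 1) (hX : X = Z * Aᵀ) (l : ℝ) (hl : 0 < l) :
    eta ⬝ᵥ (X * (Xᵀ * X + l • (1 : Matrix (Fin D) (Fin D) ℝ))⁻¹ * Xᵀ).mulVec eta
      = eta ⬝ᵥ (Z * (Zᵀ * Z + l • (1 : Matrix (Fin d) (Fin d) ℝ))⁻¹ * Zᵀ).mulVec eta := by
  set M : Matrix (Fin D) (Fin D) ℝ := Xᵀ * X + l • (1 : Matrix (Fin D) (Fin D) ℝ) with hM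
  set N : Matrix (Fin d) (Fin d) ℝ := Zᵀ * Z + l • (1 : Matrix (Fin d) (Fin d) ℝ) with hN
  have hsmul : ∀ (m : ℕ), (l • (1 : Matrix (Fin m) (Fin m) ℝ)).PosDef := by
    intro m
    rw [smul_one_eq_diagonal]
    exact posDef_diagonal_iff.mpr fun _ => hl
  have hMpd : M.PosDef := by
    have h1 : (Xᵀ * X).PosSemidef := by
      have := posSemidef_conjTranspose_mul_self X
      rwa [conjTranspose_eq_transpose_of_trivial] at this
    exact Matrix.PosDef.posSemidef_add h1 (hsmul D)
  have hNpd : N.PosDef := by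
    have h1 : (Zᵀ * Z).PosSemidef := by
      have := posSemidef_conjTranspose_mul_self Z
      rwa [conjTranspose_eq_transpose_of_trivial] at this
    exact Matrix.PosDef.posSemidef_add h1 (hsmul d)
  have hMu := hMpd.isUnit
  have hNu := hNpd.isUnit
  -- key intertwining: M * A = A * N
  have hXtX : Xᵀ * X = A * (Zᵀ * Z) * Aᵀ := by
    rw [hX, transpose_mul, transpose_transpose, Matrix.mul_assoc, Matrix.mul_assoc,
      Matrix.mul_assoc]
  have hkey : M * A = A * N := by
    rw [hM, hN, Matrix.add_mul, Matrix.mul_add, hXtX]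
    congr 1
    · rw [Matrix.mul_assoc (A * (Zᵀ * Z)), hA, Matrix.mul_one]
    · rw [Matrix.smul_mul, Matrix.mul_smul, Matrix.one_mul, Matrix.mul_one]
  have hinv : M⁻¹ * A = A * N⁻¹ := by
    have := congrArg (fun B => M⁻¹ * B * N⁻¹) hkey
    rw [← Matrix.mul_assoc, ← Matrix.mul_assoc, nonsing_inv_mul M (isUnit_iff_isUnit_det M |>.mp hMu),
      Matrix.one_mul, Matrix.mul_assoc (M⁻¹ * A), mul_nonsing_inv N (isUnit_iff_isUnit_det N |>.mp hNu),
      Matrix.mul_one] at this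
    exact this.symm
  have hfinal : X * M⁻¹ * Xᵀ = Z * N⁻¹ * Zᵀ := by
    rw [hX, transpose_mul, transpose_transpose]
    have h2 : Z * Aᵀ * M⁻¹ * (A * Zᵀ) = Z * (Aᵀ * (M⁻¹ * A)) * Zᵀ := by
      simp only [Matrix.mul_assoc]
    rw [h2, hinv, ← Matrix.mul_assoc Aᵀ A, hA, Matrix.one_mul]
  rw [hfinal]
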